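/- (Recursive and importance-sampling characterizations of the marginal state–action density ratio.) For every 0 ≤ j ≤ H and every (s,a) ∈ S×A, with μ_{−1} ≡ 1: (i) μ_j(s,a) = E_{p_{π^b}}[ μ_{j−1}(s_{j−1},a_{j−1}) ν̃_j | s_j = s, a_j = a ], and (ii) μ_j(s,a) = E_{p_{π^b}}[ ν_{0:j} | s_j = s, a_j = a ]. -/

import Mathlib

open Finset

noncomputable section

namespace OPPG

/-- The parameter space `ℝ^D`. -/
abbrev Param (D : ℕ) : Type := EuclideanSpace ℝ (Fin D)

/-- A trajectory `(s₀, a₀, r₀, …, s_H, a_H, r_H, s_{H+1})`. -/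
abbrev Traj (S A R : Type) (H : ℕ) : Type :=
  (Fin (H + 2) → S) × (Fin (H + 1) → A) × (Fin (H + 1) → R)

variable {S A R : Type} [Fintype S] [Fintype A] [Fintype R]
  [DecidableEq S] [DecidableEq A] [DecidableEq R] {H D : ℕ}

/-- Expectation of a (vector-valued) trajectory function under the density `p`. -/
def expec {E : Type*} [AddCommMonoid E] [Module ℝ E]
    (p : Traj S A R H → ℝ) (f : Traj S A R H → E) : E :=
  ∑ T, p T • f T

open Classical in
/-- Probability of the event `ev` under the density `p`. -/
def pr (p : Traj S A R H → ℝ) (ev : Traj S A R H → Prop) : ℝ :=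
  ∑ T, if ev T then p T else 0

open Classical in
/-- Conditional expectation of `f` given the event `ev`, under the density `p`. -/
def cexp {E : Type*} [AddCommMonoid E] [Module ℝ E]
    (p : Traj S A R H → ℝ) (ev : Traj S A R H → Prop) (f : Traj S A R H → E) : E :=
  (∑ T, if ev T then p T else 0)⁻¹ • ∑ T, if ev T then p T • f T else 0

/-- Conditional covariance matrix of the `ℝ^D`-valued `Y` given the event `ev`. -/
def ccov (p : Traj S A R H → ℝ) (ev : Traj S A R H → Prop)
    (Y : Traj S A R H → Param D) : Matrix (Fin D) (Fin D) ℝ :=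
  Matrix.of fun i j =>
    cexp p ev (fun T => Y T i * Y T j) -
      cexp p ev (fun T => Y T i) * cexp p ev (fun T => Y T j)

/-- Covariance matrix of the `ℝ^D`-valued trajectory function `Y` under `p`. -/
def covMatrix (p : Traj S A R H → ℝ) (Y : Traj S A R H → Param D) :
    Matrix (Fin D) (Fin D) ℝ :=
  Matrix.of fun i j =>
    expec p (fun T => Y T i * Y T j) -
      expec p (fun T => Y T i) * expec p (fun T => Y T j)

/-- Operator norm of a `D × D` real matrix (as an operator on Euclidean space). -/
def opNorm (M : Matrix (Fin D) (Fin D) ℝ) : ℝ :=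
  ‖Matrix.toEuclideanCLM (𝕜 := ℝ) M‖

/-- `∑_{k = j}^{H} r_k`. -/
def cumRew (rval : R → ℝ) (j : ℕ) (T : Traj S A R H) : ℝ :=
  ∑ k : Fin (H + 1), if j ≤ (k : ℕ) then rval (T.2.2 k) else 0

open Classical in
/-- The joint probability `p(s_j = s, a_j = a)` under the trajectory density `p`. -/
def jointProb (p : Traj S A R H → ℝ) (j : Fin (H + 1)) (s : S) (a : A) : ℝ :=
  ∑ T, if T.1 j.castSucc = s ∧ T.2.1 j = a then p T else 0

/-- A finite-horizon MDP model: initial distribution, transitions, rewards,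
reward values, behavior policy and the parametric family of target policies. -/
structure Model (S A R : Type) (H D : ℕ) where
  p0 : S → ℝ
  ptr : Fin (H + 1) → S → A → S → ℝ
  prew : Fin (H + 1) → S → A → R → ℝ
  rval : R → ℝ
  pib : Fin (H + 1) → S → A → ℝ
  pit : Param D → Fin (H + 1) → S → A → ℝ

namespace Model

variable (M : Model S A R H D)

/-- Trajectory density induced by a policy `pi`. -/
def traj (pi : Fin (H + 1) → S → A → ℝ) (T : Traj S A R H) : ℝ :=
  M.p0 (T.1 0) * ∏ t : Fin (H + 1),
    (pi t (T.1 t.castSucc) (T.2.1 t) * M.prew t (T.1 t.castSucc) (T.2.1 t) (T.2.2 t) *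
      M.ptr t (T.1 t.castSucc) (T.2.1 t) (T.1 t.succ))

/-- Trajectory density under the behavior policy. -/
def pb : Traj S A R H → ℝ := M.traj M.pib

/-- Trajectory density under the target policy `π^{θ'}`. -/
def pe (θ' : Param D) : Traj S A R H → ℝ := M.traj (M.pit θ')

/-- The `q`-function `q_j(s,a) = E_{π^{θ'}}[∑_{k≥j} r_k ∣ s_j = s, a_j = a]`. -/
def qfun (θ' : Param D) (j : Fin (H + 1)) (s : S) (a : A) : ℝ :=
  cexp (M.pe θ') (fun T => T.1 j.castSucc = s ∧ T.2.1 j = a) (cumRew M.rval (j : ℕ))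

/-- The `v`-function `v_j(s)`, with the convention `v_{H+1} ≡ 0`. -/
def vfun (θ' : Param D) (j : Fin (H + 2)) (s : S) : ℝ :=
  if (j : ℕ) ≤ H then cexp (M.pe θ') (fun T => T.1 j = s) (cumRew M.rval (j : ℕ)) else 0

/-- The marginal state–action density ratio `μ_j(s,a)`. -/
def mufun (θ' : Param D) (j : Fin (H + 1)) (s : S) (a : A) : ℝ :=
  jointProb (M.pe θ') j s a / jointProb M.pb j s a

/-- The policy score `g_t = ∇_θ log π^θ_t(a ∣ s)`. -/
def score (θ : Param D) (t : Fin (H + 1)) (s : S) (a : A) : Param D :=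
  gradient (fun θ' => Real.log (M.pit θ' t s a)) θ

/-- The policy score evaluated along a trajectory. -/
def scoreT (θ : Param D) (t : Fin (H + 1)) (T : Traj S A R H) : Param D :=
  M.score θ t (T.1 t.castSucc) (T.2.1 t)

/-- `d^q_j = ∇_θ q_j`. -/
def dq (θ : Param D) (j : Fin (H + 1)) (s : S) (a : A) : Param D :=
  gradient (fun θ' => M.qfun θ' j s a) θ

/-- `d^v_j = ∇_θ v_j` (so `d^v_{H+1} ≡ 0`). -/
def dv (θ : Param D) (j : Fin (H + 2)) (s : S) : Param D :=
  gradient (fun θ' => M.vfun θ' j s) θ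

/-- `d^μ_j = ∇_θ μ_j`. -/
def dmu (θ : Param D) (j : Fin (H + 1)) (s : S) (a : A) : Param D :=
  gradient (fun θ' => M.mufun θ' j s a) θ

/-- The single-step density ratio `ν̃_t` along a trajectory. -/
def nu (θ' : Param D) (t : Fin (H + 1)) (T : Traj S A R H) : ℝ :=
  M.pit θ' t (T.1 t.castSucc) (T.2.1 t) / M.pib t (T.1 t.castSucc) (T.2.1 t)

/-- The cumulative density ratio `ν_{0:k-1} = ∏_{t < k} ν̃_t` (so `nuUpto 0 = 1`). -/
def nuUpto (θ' : Param D) (k : ℕ) (T : Traj S A R H) : ℝ :=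
  ∏ t : Fin (H + 1), if (t : ℕ) < k then M.nu θ' t T else 1

/-- The cumulative density ratio `ν_{k:l} = ∏_{k ≤ t ≤ l} ν̃_t` (empty product is `1`). -/
def nuSeg (θ' : Param D) (k l : ℕ) (T : Traj S A R H) : ℝ :=
  ∏ t : Fin (H + 1), if k ≤ (t : ℕ) ∧ (t : ℕ) ≤ l then M.nu θ' t T else 1

/-- The policy value `J(θ') = E_{π^{θ'}}[∑_t r_t]`. -/
def Jval (θ' : Param D) : ℝ :=
  expec (M.pe θ') (fun T => ∑ t : Fin (H + 1), M.rval (T.2.2 t))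

/-- The policy gradient `Z(θ) = ∇_θ J(θ)`. -/
def Zval (θ : Param D) : Param D := gradient M.Jval θ

/-- `μ_{j-1}(s_{j-1}, a_{j-1})` along a trajectory, with the convention `μ_{-1} ≡ 1`. -/
def muPrev (θ : Param D) (j : Fin (H + 1)) (T : Traj S A R H) : ℝ :=
  if (j : ℕ) = 0 then 1 else
    let j' : Fin (H + 1) := ⟨(j : ℕ) - 1, by omega⟩
    M.mufun θ j' (T.1 j'.castSucc) (T.2.1 j')

/-- `d^μ_{j-1}(s_{j-1}, a_{j-1})` along a trajectory, with the convention `d^μ_{-1} ≡ 0`. -/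
def dmuPrev (θ : Param D) (j : Fin (H + 1)) (T : Traj S A R H) : Param D :=
  if (j : ℕ) = 0 then 0 else
    let j' : Fin (H + 1) := ⟨(j : ℕ) - 1, by omega⟩
    M.dmu θ j' (T.1 j'.castSucc) (T.2.1 j')

/-- The efficient influence function `ξ_MDP` (with mean `Z(θ)`). -/
def xiMDP (θ : Param D) (T : Traj S A R H) : Param D :=
  ∑ j : Fin (H + 1),
    ((M.rval (T.2.2 j) - M.qfun θ j (T.1 j.castSucc) (T.2.1 j)) •
        M.dmu θ j (T.1 j.castSucc) (T.2.1 j)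
      - M.mufun θ j (T.1 j.castSucc) (T.2.1 j) • M.dq θ j (T.1 j.castSucc) (T.2.1 j)
      + M.muPrev θ j T • M.dv θ j.castSucc (T.1 j.castSucc)
      + M.vfun θ j.castSucc (T.1 j.castSucc) • M.dmuPrev θ j T)

/-- The step-wise importance sampling integrand `∑_t ν_{0:t} r_t ∑_{s ≤ t} g_s`. -/
def stepIS (θ : Param D) (T : Traj S A R H) : Param D :=
  ∑ t : Fin (H + 1), (M.nuUpto θ ((t : ℕ) + 1) T * M.rval (T.2.2 t)) •
    ∑ s : Fin (H + 1), (if (s : ℕ) ≤ (t : ℕ) then M.scoreT θ s T else 0)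

end Model

/-- All the standing assumptions on the model: `p₀`, the transitions, and the reward
distributions are probability distributions; rewards are nonnegative; the behavior policy is
a positive probability distribution over actions; every target policy is a positive
probability distribution over actions; and all state–action marginals of the behavior
trajectory distribution are positive. -/
structure Model.Valid (M : Model S A R H D) : Prop where
  p0_nonneg : ∀ s, 0 ≤ M.p0 s
  p0_sum : ∑ s, M.p0 s = 1
  ptr_nonneg : ∀ t s a s', 0 ≤ M.ptr t s a s'
  ptr_sum : ∀ t s a, ∑ s', M.ptr t s a s' = 1
  prew_nonneg : ∀ t s a r, 0 ≤ M.prew t s a r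
  prew_sum : ∀ t s a, ∑ r, M.prew t s a r = 1
  rval_nonneg : ∀ r, 0 ≤ M.rval r
  pib_pos : ∀ t s a, 0 < M.pib t s a
  pib_sum : ∀ t s, ∑ a, M.pib t s a = 1
  pit_pos : ∀ θ' t s a, 0 < M.pit θ' t s a
  pit_sum : ∀ θ' t s, ∑ a, M.pit θ' t s a = 1
  pb_marg_pos : ∀ (j : Fin (H + 1)) (s : S) (a : A), 0 < jointProb M.pb j s a

end OPPG

namespace OPPG

variable {S A R : Type} [Fintype S] [Fintype A] [Fintype R]
  [DecidableEq S] [DecidableEq A] [DecidableEq R] {H D : ℕ}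

set_option linter.unusedSectionVars false

lemma sum_update_split {ι X : Type*} [Fintype ι] [Fintype X] [DecidableEq ι] [DecidableEq X]
    (i : ι) (h w : (ι → X) → ℝ)
    (hh : ∀ f x, h (Function.update f i x) = h f) :
    ∑ f, h f * w f = (Fintype.card X : ℝ)⁻¹ * ∑ f, h f * ∑ x, w (Function.update f i x) := by
  classical
  rcases isEmpty_or_nonempty X with hX | hX
  · have : IsEmpty (ι → X) := ⟨fun f => IsEmpty.false (f i)⟩
    simp
  set e := Equiv.funSplitAt i X with he
  have upd_fact : ∀ (y : X) (g : {j // j ≠ i} → X) (x : X),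
      Function.update (e.symm (y, g)) i x = e.symm (x, g) := by
    intro y g x
    funext j
    by_cases hj : j = i
    · subst hj; simp [he, Equiv.funSplitAt]
    · simp [he, Equiv.funSplitAt, Function.update_of_ne hj, hj]
  have hind : ∀ (y x : X) (g : {j // j ≠ i} → X),
      h (e.symm (y, g)) = h (e.symm (x, g)) := by
    intro y x g
    rw [← upd_fact y g x, hh]
  have key : ∀ (G : (ι → X) → ℝ), ∑ f, G f = ∑ p : X × ({j // j ≠ i} → X), G (e.symm p) :=
    fun G => (Equiv.sum_comp e.symm G).symm
  rw [key (fun f => h f * w f), key (fun f => h f * ∑ x, w (Function.update f i x))]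
  rw [Fintype.sum_prod_type, Fintype.sum_prod_type]
  have step : ∀ y : X,
      (∑ g : {j // j ≠ i} → X,
        h (e.symm (y, g)) * ∑ x, w (Function.update (e.symm (y, g)) i x))
      = ∑ x : X, ∑ g : {j // j ≠ i} → X, h (e.symm (x, g)) * w (e.symm (x, g)) := by
    intro y
    have : ∀ g : {j // j ≠ i} → X,
        h (e.symm (y, g)) * ∑ x, w (Function.update (e.symm (y, g)) i x)
        = ∑ x, h (e.symm (x, g)) * w (e.symm (x, g)) := by
      intro g
      rw [Finset.mul_sum]
      refine Finset.sum_congr rfl fun x _ => ?_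
      rw [upd_fact, hind y x]
    rw [Finset.sum_congr rfl fun g _ => this g, Finset.sum_comm]
  rw [Finset.sum_congr rfl fun y _ => step y, Finset.sum_const, Finset.card_univ, nsmul_eq_mul,
    ← mul_assoc, inv_mul_cancel₀ (by exact_mod_cast Fintype.card_ne_zero), one_mul]

/-- Update the state at index `i`. -/
def updS (T : Traj S A R H) (i : Fin (H + 2)) (x : S) : Traj S A R H :=
  (Function.update T.1 i x, T.2)

/-- Update the action at index `i`. -/
def updA (T : Traj S A R H) (i : Fin (H + 1)) (x : A) : Traj S A R H :=
  (T.1, Function.update T.2.1 i x, T.2.2)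

/-- Update the reward at index `i`. -/
def updR (T : Traj S A R H) (i : Fin (H + 1)) (x : R) : Traj S A R H :=
  (T.1, T.2.1, Function.update T.2.2 i x)

lemma updS_fst_ne (T : Traj S A R H) (i : Fin (H + 2)) (x : S) (j : Fin (H + 2)) (h : j ≠ i) :
    (updS T i x).1 j = T.1 j := by
  show Function.update T.1 i x j = T.1 j
  exact Function.update_of_ne h x T.1

@[simp] lemma updS_fst_same (T : Traj S A R H) (i : Fin (H + 2)) (x : S) :
    (updS T i x).1 i = x := by
  show Function.update T.1 i x i = x
  exact Function.update_self i x T.1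

lemma updA_snd_ne (T : Traj S A R H) (i : Fin (H + 1)) (x : A) (j : Fin (H + 1)) (h : j ≠ i) :
    (updA T i x).2.1 j = T.2.1 j := by
  show Function.update T.2.1 i x j = T.2.1 j
  exact Function.update_of_ne h x T.2.1

@[simp] lemma updA_snd_same (T : Traj S A R H) (i : Fin (H + 1)) (x : A) :
    (updA T i x).2.1 i = x := by
  show Function.update T.2.1 i x i = x
  exact Function.update_self i x T.2.1

lemma updR_trd_ne (T : Traj S A R H) (i : Fin (H + 1)) (x : R) (j : Fin (H + 1)) (h : j ≠ i) :
    (updR T i x).2.2 j = T.2.2 j := by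
  show Function.update T.2.2 i x j = T.2.2 j
  exact Function.update_of_ne h x T.2.2

@[simp] lemma updR_trd_same (T : Traj S A R H) (i : Fin (H + 1)) (x : R) :
    (updR T i x).2.2 i = x := by
  show Function.update T.2.2 i x i = x
  exact Function.update_self i x T.2.2

lemma sum_split_S (i : Fin (H + 2)) (h w : Traj S A R H → ℝ)
    (hh : ∀ T x, h (updS T i x) = h T) :
    ∑ T, h T * w T = (Fintype.card S : ℝ)⁻¹ * ∑ T, h T * ∑ x, w (updS T i x) := by
  calc ∑ T : Traj S A R H, h T * w T
      = ∑ q : (Fin (H + 1) → A) × (Fin (H + 1) → R), ∑ sf, h (sf, q) * w (sf, q) :=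
        Fintype.sum_prod_type_right (fun T => h T * w T)
    _ = ∑ q : (Fin (H + 1) → A) × (Fin (H + 1) → R),
          (Fintype.card S : ℝ)⁻¹ * ∑ sf, h (sf, q) * ∑ x, w (updS (sf, q) i x) :=
        Finset.sum_congr rfl fun q _ =>
          sum_update_split i (fun sf => h (sf, q)) (fun sf => w (sf, q)) (fun f x => hh (f, q) x)
    _ = (Fintype.card S : ℝ)⁻¹ * ∑ q : (Fin (H + 1) → A) × (Fin (H + 1) → R),
          ∑ sf, h (sf, q) * ∑ x, w (updS (sf, q) i x) := by rw [← Finset.mul_sum]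
    _ = (Fintype.card S : ℝ)⁻¹ * ∑ T, h T * ∑ x, w (updS T i x) := by
        rw [← Fintype.sum_prod_type_right (fun T => h T * ∑ x, w (updS T i x))]

lemma sum_split_A (i : Fin (H + 1)) (h w : Traj S A R H → ℝ)
    (hh : ∀ T x, h (updA T i x) = h T) :
    ∑ T, h T * w T = (Fintype.card A : ℝ)⁻¹ * ∑ T, h T * ∑ x, w (updA T i x) := by
  have inner : ∀ sf : Fin (H + 2) → S, ∀ rf : Fin (H + 1) → R,
      (∑ af, h (sf, af, rf) * w (sf, af, rf))
      = (Fintype.card A : ℝ)⁻¹ * ∑ af, h (sf, af, rf) * ∑ x, w (updA (sf, af, rf) i x) :=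
    fun sf rf => sum_update_split i (fun af => h (sf, af, rf)) (fun af => w (sf, af, rf))
      (fun f x => hh (sf, f, rf) x)
  calc ∑ T : Traj S A R H, h T * w T
      = ∑ sf, ∑ p : (Fin (H + 1) → A) × (Fin (H + 1) → R), h (sf, p) * w (sf, p) :=
        Fintype.sum_prod_type (fun T => h T * w T)
    _ = ∑ sf, ∑ rf, ∑ af, h (sf, af, rf) * w (sf, af, rf) :=
        Finset.sum_congr rfl fun sf _ =>
          Fintype.sum_prod_type_right (fun p => h (sf, p) * w (sf, p))
    _ = ∑ sf, ∑ rf, (Fintype.card A : ℝ)⁻¹ *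
          ∑ af, h (sf, af, rf) * ∑ x, w (updA (sf, af, rf) i x) :=
        Finset.sum_congr rfl fun sf _ => Finset.sum_congr rfl fun rf _ => inner sf rf
    _ = (Fintype.card A : ℝ)⁻¹ * ∑ sf, ∑ rf, ∑ af,
          h (sf, af, rf) * ∑ x, w (updA (sf, af, rf) i x) := by
        rw [Finset.mul_sum]; exact Finset.sum_congr rfl fun sf _ => (Finset.mul_sum ..).symm
    _ = (Fintype.card A : ℝ)⁻¹ * ∑ T, h T * ∑ x, w (updA T i x) := by
        congr 1
        rw [Fintype.sum_prod_type (fun T : Traj S A R H => h T * ∑ x, w (updA T i x))]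
        exact Finset.sum_congr rfl fun sf _ =>
          (Fintype.sum_prod_type_right (fun p => h (sf, p) * ∑ x, w (updA (sf, p) i x))).symm

lemma sum_split_R (i : Fin (H + 1)) (h w : Traj S A R H → ℝ)
    (hh : ∀ T x, h (updR T i x) = h T) :
    ∑ T, h T * w T = (Fintype.card R : ℝ)⁻¹ * ∑ T, h T * ∑ x, w (updR T i x) := by
  have inner : ∀ sf : Fin (H + 2) → S, ∀ af : Fin (H + 1) → A,
      (∑ rf, h (sf, af, rf) * w (sf, af, rf))
      = (Fintype.card R : ℝ)⁻¹ * ∑ rf, h (sf, af, rf) * ∑ x, w (updR (sf, af, rf) i x) :=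
    fun sf af => sum_update_split i (fun rf => h (sf, af, rf)) (fun rf => w (sf, af, rf))
      (fun f x => hh (sf, af, f) x)
  calc ∑ T : Traj S A R H, h T * w T
      = ∑ sf, ∑ p : (Fin (H + 1) → A) × (Fin (H + 1) → R), h (sf, p) * w (sf, p) :=
        Fintype.sum_prod_type (fun T => h T * w T)
    _ = ∑ sf, ∑ af, ∑ rf, h (sf, af, rf) * w (sf, af, rf) :=
        Finset.sum_congr rfl fun sf _ =>
          Fintype.sum_prod_type (fun p => h (sf, p) * w (sf, p))
    _ = ∑ sf, ∑ af, (Fintype.card R : ℝ)⁻¹ *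
          ∑ rf, h (sf, af, rf) * ∑ x, w (updR (sf, af, rf) i x) :=
        Finset.sum_congr rfl fun sf _ => Finset.sum_congr rfl fun af _ => inner sf af
    _ = (Fintype.card R : ℝ)⁻¹ * ∑ sf, ∑ af, ∑ rf,
          h (sf, af, rf) * ∑ x, w (updR (sf, af, rf) i x) := by
        rw [Finset.mul_sum]; exact Finset.sum_congr rfl fun sf _ => (Finset.mul_sum ..).symm
    _ = (Fintype.card R : ℝ)⁻¹ * ∑ T, h T * ∑ x, w (updR T i x) := by
        congr 1
        rw [Fintype.sum_prod_type (fun T : Traj S A R H => h T * ∑ x, w (updR T i x))]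
        exact Finset.sum_congr rfl fun sf _ =>
          (Fintype.sum_prod_type (fun p => h (sf, p) * ∑ x, w (updR (sf, p) i x))).symm

/-- The single-step transition factor in the trajectory density. -/
def Wfac (M : Model S A R H D) (pi : Fin (H + 1) → S → A → ℝ) (t : Fin (H + 1))
    (T : Traj S A R H) : ℝ :=
  pi t (T.1 t.castSucc) (T.2.1 t) * M.prew t (T.1 t.castSucc) (T.2.1 t) (T.2.2 t) *
    M.ptr t (T.1 t.castSucc) (T.2.1 t) (T.1 t.succ)

/-- The trajectory density truncated to the first `k` steps. -/
def pref (M : Model S A R H D) (pi : Fin (H + 1) → S → A → ℝ) (k : ℕ)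
    (T : Traj S A R H) : ℝ :=
  M.p0 (T.1 0) * ∏ t : Fin (H + 1), if (t : ℕ) < k then Wfac M pi t T else 1

lemma traj_eq_pref (M : Model S A R H D) (pi : Fin (H + 1) → S → A → ℝ) (T : Traj S A R H) :
    M.traj pi T = pref M pi (H + 1) T := by
  unfold Model.traj pref Wfac
  exact congrArg (M.p0 (T.1 0) * ·) (Finset.prod_congr rfl fun t _ => (if_pos t.isLt).symm)

lemma pref_updS (M : Model S A R H D) (pi : Fin (H + 1) → S → A → ℝ) (k : ℕ)
    (T : Traj S A R H) (i : Fin (H + 2)) (x : S) (hik : k < (i : ℕ)) :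
    pref M pi k (updS T i x) = pref M pi k T := by
  unfold pref
  refine congrArg₂ (· * ·)
    (congrArg M.p0 (updS_fst_ne T i x 0 (Fin.ne_of_val_ne (by simp only [Fin.val_zero]; omega))))
    (Finset.prod_congr rfl fun t _ => ?_)
  by_cases ht : (t : ℕ) < k
  · rw [if_pos ht, if_pos ht]
    unfold Wfac
    rw [updS_fst_ne T i x t.castSucc
        (Fin.ne_of_val_ne (by simp only [Fin.coe_castSucc]; omega)),
      updS_fst_ne T i x t.succ (Fin.ne_of_val_ne (by simp only [Fin.val_succ]; omega))]
    rfl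
  · rw [if_neg ht, if_neg ht]

lemma pref_updA (M : Model S A R H D) (pi : Fin (H + 1) → S → A → ℝ) (k : ℕ)
    (T : Traj S A R H) (i : Fin (H + 1)) (x : A) (hik : k ≤ (i : ℕ)) :
    pref M pi k (updA T i x) = pref M pi k T := by
  unfold pref
  refine congrArg (M.p0 (T.1 0) * ·) (Finset.prod_congr rfl fun t _ => ?_)
  by_cases ht : (t : ℕ) < k
  · rw [if_pos ht, if_pos ht]
    unfold Wfac
    rw [updA_snd_ne T i x t (Fin.ne_of_val_ne (by omega))]
    rfl
  · rw [if_neg ht, if_neg ht]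

lemma pref_updR (M : Model S A R H D) (pi : Fin (H + 1) → S → A → ℝ) (k : ℕ)
    (T : Traj S A R H) (i : Fin (H + 1)) (x : R) (hik : k ≤ (i : ℕ)) :
    pref M pi k (updR T i x) = pref M pi k T := by
  unfold pref
  refine congrArg (M.p0 (T.1 0) * ·) (Finset.prod_congr rfl fun t _ => ?_)
  by_cases ht : (t : ℕ) < k
  · rw [if_pos ht, if_pos ht]
    unfold Wfac
    rw [updR_trd_ne T i x t (Fin.ne_of_val_ne (by omega))]
    rfl
  · rw [if_neg ht, if_neg ht]

lemma pref_succ (M : Model S A R H D) (pi : Fin (H + 1) → S → A → ℝ) (k : ℕ) (hk : k ≤ H)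
    (T : Traj S A R H) :
    pref M pi (k + 1) T = pref M pi k T * Wfac M pi ⟨k, by omega⟩ T := by
  unfold pref
  have key : ∀ t : Fin (H + 1),
      (if (t : ℕ) < k + 1 then Wfac M pi t T else 1)
      = (if (t : ℕ) < k then Wfac M pi t T else 1) *
          (if t = ⟨k, by omega⟩ then Wfac M pi t T else 1) := by
    intro t
    by_cases h1 : (t : ℕ) < k
    · rw [if_pos (by omega), if_pos h1, if_neg (by rw [Fin.ext_iff]; simp; omega), mul_one]
    · by_cases h2 : t = ⟨k, by omega⟩
      · have : (t : ℕ) = k := by rw [h2]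
        rw [if_pos (by omega), if_neg h1, if_pos h2, one_mul, h2]
      · have : (t : ℕ) ≠ k := fun hc => h2 (Fin.ext hc)
        rw [if_neg (by omega), if_neg h1, if_neg h2, mul_one]
  rw [Finset.prod_congr rfl fun t _ => key t, Finset.prod_mul_distrib,
    Finset.prod_ite_eq' Finset.univ (⟨k, by omega⟩ : Fin (H + 1)) (fun t => Wfac M pi t T),
    if_pos (Finset.mem_univ _), mul_assoc]

lemma step_sum (M : Model S A R H D) (pi : Fin (H + 1) → S → A → ℝ)
    (hpi : ∀ t s, ∑ a, pi t s a = 1)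
    (hrw : ∀ t s a, ∑ r, M.prew t s a r = 1)
    (htr : ∀ t s a, ∑ s', M.ptr t s a s' = 1)
    (k : ℕ) (hk : k ≤ H) (f : Traj S A R H → ℝ)
    (hfs : ∀ T (i : Fin (H + 2)) x, k < (i : ℕ) → f (updS T i x) = f T)
    (hfa : ∀ T (i : Fin (H + 1)) x, k ≤ (i : ℕ) → f (updA T i x) = f T)
    (hfr : ∀ T (i : Fin (H + 1)) x, k ≤ (i : ℕ) → f (updR T i x) = f T) :
    ∑ T, pref M pi (k + 1) T * f T
      = ((Fintype.card S * Fintype.card A * Fintype.card R : ℕ) : ℝ)⁻¹ *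
          ∑ T, pref M pi k T * f T := by
  set kk : Fin (H + 1) := ⟨k, by omega⟩ with hkk
  have hkval : (kk : ℕ) = k := rfl
  have hsuccval : ((kk.succ : Fin (H + 2)) : ℕ) = k + 1 := rfl
  have hccval : ((kk.castSucc : Fin (H + 2)) : ℕ) = k := rfl
  have hnecc : kk.castSucc ≠ kk.succ := Fin.ne_of_val_ne (by omega)
  have e1 : ∑ T, pref M pi (k + 1) T * f T
      = ∑ T : Traj S A R H,
          (pref M pi k T * f T *
            (pi kk (T.1 kk.castSucc) (T.2.1 kk) *
              M.prew kk (T.1 kk.castSucc) (T.2.1 kk) (T.2.2 kk)))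
          * M.ptr kk (T.1 kk.castSucc) (T.2.1 kk) (T.1 kk.succ) := by
    refine Finset.sum_congr rfl fun T _ => ?_
    rw [pref_succ M pi k hk T]
    show pref M pi k T * Wfac M pi kk T * f T = _
    unfold Wfac
    ring
  rw [e1, sum_split_S kk.succ _ _ ?inv1]
  case inv1 =>
    intro T x
    rw [pref_updS M pi k T kk.succ x (by omega),
      hfs T kk.succ x (by omega),
      updS_fst_ne T kk.succ x kk.castSucc hnecc]
    rfl
  have w1 : ∀ T : Traj S A R H,
      (∑ x, M.ptr kk ((updS T kk.succ x).1 kk.castSucc) ((updS T kk.succ x).2.1 kk)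
        ((updS T kk.succ x).1 kk.succ)) = 1 := by
    intro T
    have : ∀ x : S, M.ptr kk ((updS T kk.succ x).1 kk.castSucc) ((updS T kk.succ x).2.1 kk)
        ((updS T kk.succ x).1 kk.succ) = M.ptr kk (T.1 kk.castSucc) (T.2.1 kk) x := by
      intro x
      rw [updS_fst_ne T kk.succ x kk.castSucc hnecc, updS_fst_same]
      rfl
    rw [Finset.sum_congr rfl fun x _ => this x, htr]
  rw [Finset.sum_congr rfl fun T _ => by rw [w1 T, mul_one]]
  have e2 : ∑ T : Traj S A R H,
      pref M pi k T * f T *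
        (pi kk (T.1 kk.castSucc) (T.2.1 kk) * M.prew kk (T.1 kk.castSucc) (T.2.1 kk) (T.2.2 kk))
      = ∑ T : Traj S A R H, (pref M pi k T * f T * pi kk (T.1 kk.castSucc) (T.2.1 kk))
          * M.prew kk (T.1 kk.castSucc) (T.2.1 kk) (T.2.2 kk) :=
    Finset.sum_congr rfl fun T _ => by ring
  rw [e2, sum_split_R kk _ _ ?inv2]
  case inv2 =>
    intro T x
    rw [pref_updR M pi k T kk x (by omega), hfr T kk x (by omega)]
    rfl
  have w2 : ∀ T : Traj S A R H,
      (∑ x, M.prew kk ((updR T kk x).1 kk.castSucc) ((updR T kk x).2.1 kk)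
        ((updR T kk x).2.2 kk)) = 1 := by
    intro T
    have : ∀ x : R, M.prew kk ((updR T kk x).1 kk.castSucc) ((updR T kk x).2.1 kk)
        ((updR T kk x).2.2 kk) = M.prew kk (T.1 kk.castSucc) (T.2.1 kk) x := by
      intro x
      rw [updR_trd_same]
      rfl
    rw [Finset.sum_congr rfl fun x _ => this x, hrw]
  rw [Finset.sum_congr rfl fun T _ => by rw [w2 T, mul_one]]
  rw [sum_split_A kk _ _ ?inv3]
  case inv3 =>
    intro T x
    rw [pref_updA M pi k T kk x (by omega), hfa T kk x (by omega)]
  have w3 : ∀ T : Traj S A R H,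
      (∑ x, pi kk ((updA T kk x).1 kk.castSucc) ((updA T kk x).2.1 kk)) = 1 := by
    intro T
    have : ∀ x : A, pi kk ((updA T kk x).1 kk.castSucc) ((updA T kk x).2.1 kk)
        = pi kk (T.1 kk.castSucc) x := by
      intro x
      rw [updA_snd_same]
      rfl
    rw [Finset.sum_congr rfl fun x _ => this x, hpi]
  rw [Finset.sum_congr rfl fun T _ => by rw [w3 T, mul_one]]
  push_cast
  rw [mul_inv, mul_inv]
  ring

lemma tail_sum (M : Model S A R H D) (pi : Fin (H + 1) → S → A → ℝ)
    (hpi : ∀ t s, ∑ a, pi t s a = 1)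
    (hrw : ∀ t s a, ∑ r, M.prew t s a r = 1)
    (htr : ∀ t s a, ∑ s', M.ptr t s a s' = 1)
    (f : Traj S A R H → ℝ) (d k : ℕ) (hdk : k + d = H + 1)
    (hfs : ∀ T (i : Fin (H + 2)) x, k < (i : ℕ) → f (updS T i x) = f T)
    (hfa : ∀ T (i : Fin (H + 1)) x, k ≤ (i : ℕ) → f (updA T i x) = f T)
    (hfr : ∀ T (i : Fin (H + 1)) x, k ≤ (i : ℕ) → f (updR T i x) = f T) :
    ∑ T, M.traj pi T * f T
      = (((Fintype.card S * Fintype.card A * Fintype.card R : ℕ) : ℝ) ^ d)⁻¹ *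
          ∑ T, pref M pi k T * f T := by
  induction d generalizing k with
  | zero =>
    have hkH : k = H + 1 := by omega
    subst hkH
    simp only [pow_zero, inv_one, one_mul]
    exact Finset.sum_congr rfl fun T _ => by rw [traj_eq_pref]
  | succ d ih =>
    have hk : k ≤ H := by omega
    have hstep := step_sum M pi hpi hrw htr k hk f hfs hfa hfr
    have ihres := ih (k + 1) (by omega) (fun T i x h => hfs T i x (by omega))
      (fun T i x h => hfa T i x (by omega)) (fun T i x h => hfr T i x (by omega))
    rw [ihres, hstep, pow_succ, mul_inv]
    ring

/-- Indicator that the state at index `i` equals `s`. -/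
def ind1S (i : Fin (H + 2)) (s : S) (T : Traj S A R H) : ℝ := if T.1 i = s then 1 else 0

/-- Indicator that the action at index `i` equals `a`. -/
def ind1A (i : Fin (H + 1)) (a : A) (T : Traj S A R H) : ℝ := if T.2.1 i = a then 1 else 0

lemma ind1S_updS_ne (i : Fin (H + 2)) (s : S) (T : Traj S A R H) (i' : Fin (H + 2)) (x : S)
    (h : i ≠ i') : ind1S i s (updS T i' x) = ind1S i s T := by
  unfold ind1S
  rw [updS_fst_ne T i' x i h]

@[simp] lemma ind1S_updA (i : Fin (H + 2)) (s : S) (T : Traj S A R H) (i' : Fin (H + 1))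
    (x : A) : ind1S i s (updA T i' x) = ind1S i s T := rfl

@[simp] lemma ind1S_updR (i : Fin (H + 2)) (s : S) (T : Traj S A R H) (i' : Fin (H + 1))
    (x : R) : ind1S i s (updR T i' x) = ind1S i s T := rfl

lemma ind1A_updA_ne (i : Fin (H + 1)) (a : A) (T : Traj S A R H) (i' : Fin (H + 1)) (x : A)
    (h : i ≠ i') : ind1A i a (updA T i' x) = ind1A i a T := by
  unfold ind1A
  rw [updA_snd_ne T i' x i h]

@[simp] lemma ind1A_updS (i : Fin (H + 1)) (a : A) (T : Traj S A R H) (i' : Fin (H + 2))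
    (x : S) : ind1A i a (updS T i' x) = ind1A i a T := rfl

@[simp] lemma ind1A_updR (i : Fin (H + 1)) (a : A) (T : Traj S A R H) (i' : Fin (H + 1))
    (x : R) : ind1A i a (updR T i' x) = ind1A i a T := rfl

lemma ind1S_sum (i : Fin (H + 2)) (s : S) (T : Traj S A R H) :
    ∑ x, ind1S i s (updS T i x) = 1 := by
  unfold ind1S
  simp

lemma ind1A_sum (i : Fin (H + 1)) (a : A) (T : Traj S A R H) :
    ∑ x, ind1A i a (updA T i x) = 1 := by
  unfold ind1A
  simp

lemma ind1S_partition (i : Fin (H + 2)) (T : Traj S A R H) :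
    ∑ s : S, ind1S i s T = 1 := by
  unfold ind1S
  simp

lemma ind1A_partition (i : Fin (H + 1)) (T : Traj S A R H) :
    ∑ a : A, ind1A i a T = 1 := by
  unfold ind1A
  simp

lemma ind1S_pin (i : Fin (H + 2)) (s : S) (T : Traj S A R H) (g : S → ℝ) :
    ind1S i s T * g (T.1 i) = ind1S i s T * g s := by
  unfold ind1S
  split_ifs with h
  · rw [h]
  · rw [zero_mul, zero_mul]

lemma ind1A_pin (i : Fin (H + 1)) (a : A) (T : Traj S A R H) (g : A → ℝ) :
    ind1A i a T * g (T.2.1 i) = ind1A i a T * g a := by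
  unfold ind1A
  split_ifs with h
  · rw [h]
  · rw [zero_mul, zero_mul]

lemma jointProb_eq_sum (p : Traj S A R H → ℝ) (j : Fin (H + 1)) (s : S) (a : A) :
    jointProb p j s a = ∑ T, p T * (ind1S j.castSucc s T * ind1A j a T) := by
  unfold jointProb ind1S ind1A
  refine Finset.sum_congr rfl fun T _ => ?_
  by_cases h1 : T.1 j.castSucc = s <;> by_cases h2 : T.2.1 j = a <;> simp [h1, h2]

lemma jointProb_tail (M : Model S A R H D) (pi : Fin (H + 1) → S → A → ℝ)
    (hpi : ∀ t s, ∑ a, pi t s a = 1)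
    (hrw : ∀ t s a, ∑ r, M.prew t s a r = 1)
    (htr : ∀ t s a, ∑ s', M.ptr t s a s' = 1)
    (j : Fin (H + 1)) (s : S) (a : A) :
    jointProb (M.traj pi) j s a
      = (((Fintype.card S * Fintype.card A * Fintype.card R : ℕ) : ℝ) ^ (H - (j : ℕ)))⁻¹ *
          ∑ T, pref M pi ((j : ℕ) + 1) T * (ind1S j.castSucc s T * ind1A j a T) := by
  rw [jointProb_eq_sum]
  refine tail_sum M pi hpi hrw htr _ (H - (j : ℕ)) ((j : ℕ) + 1) (by omega) ?_ ?_ ?_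
  · intro T i x h
    rw [ind1S_updS_ne j.castSucc s T i x
      (Fin.ne_of_val_ne (by simp only [Fin.coe_castSucc]; omega)), ind1A_updS]
  · intro T i x h
    rw [ind1A_updA_ne j a T i x (Fin.ne_of_val_ne (by omega)), ind1S_updA]
  · intro T i x h
    rw [ind1S_updR, ind1A_updR]

lemma pref_policy_congr (M : Model S A R H D) (pi pi' : Fin (H + 1) → S → A → ℝ) (k : ℕ)
    (hag : ∀ t : Fin (H + 1), (t : ℕ) < k → pi t = pi' t) (T : Traj S A R H) :
    pref M pi k T = pref M pi' k T := by
  unfold pref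
  refine congrArg (M.p0 (T.1 0) * ·) (Finset.prod_congr rfl fun t _ => ?_)
  by_cases ht : (t : ℕ) < k
  · rw [if_pos ht, if_pos ht]
    unfold Wfac
    rw [hag t ht]
  · rw [if_neg ht, if_neg ht]

lemma jointProb_policy_agree (M : Model S A R H D) (pi pi' : Fin (H + 1) → S → A → ℝ)
    (hpi : ∀ t s, ∑ a, pi t s a = 1) (hpi' : ∀ t s, ∑ a, pi' t s a = 1)
    (hrw : ∀ t s a, ∑ r, M.prew t s a r = 1)
    (htr : ∀ t s a, ∑ s', M.ptr t s a s' = 1)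
    (j : Fin (H + 1)) (s : S) (a : A)
    (hag : ∀ t : Fin (H + 1), (t : ℕ) ≤ (j : ℕ) → pi t = pi' t) :
    jointProb (M.traj pi) j s a = jointProb (M.traj pi') j s a := by
  rw [jointProb_tail M pi hpi hrw htr j s a, jointProb_tail M pi' hpi' hrw htr j s a]
  refine congrArg _ (Finset.sum_congr rfl fun T _ => ?_)
  rw [pref_policy_congr M pi pi' ((j : ℕ) + 1) (fun t ht => hag t (by omega)) T]

lemma peel_S (M : Model S A R H D)
    (htr : ∀ t s a, ∑ s', M.ptr t s a s' = 1)
    (kk : Fin (H + 1)) (i : Fin (H + 2)) (u : S) (v : A) (g : Traj S A R H → ℝ)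
    (hg : ∀ T x, g (updS T i x) = g T) :
    ∑ T, g T * M.ptr kk u v (T.1 i) = (Fintype.card S : ℝ)⁻¹ * ∑ T, g T := by
  rw [sum_split_S i g _ hg]
  congr 1
  refine Finset.sum_congr rfl fun T _ => ?_
  rw [Finset.sum_congr rfl fun x (_ : x ∈ Finset.univ) => by rw [updS_fst_same], htr, mul_one]

lemma peel_R (M : Model S A R H D)
    (hrw : ∀ t s a, ∑ r, M.prew t s a r = 1)
    (kk : Fin (H + 1)) (u : S) (v : A) (g : Traj S A R H → ℝ)
    (hg : ∀ T x, g (updR T kk x) = g T) :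
    ∑ T, g T * M.prew kk u v (T.2.2 kk) = (Fintype.card R : ℝ)⁻¹ * ∑ T, g T := by
  rw [sum_split_R kk g _ hg]
  congr 1
  refine Finset.sum_congr rfl fun T _ => ?_
  rw [Finset.sum_congr rfl fun x (_ : x ∈ Finset.univ) => by rw [updR_trd_same], hrw, mul_one]

lemma peel_A (pi : Fin (H + 1) → S → A → ℝ)
    (hpi : ∀ t s, ∑ a, pi t s a = 1)
    (kk : Fin (H + 1)) (u : S) (g : Traj S A R H → ℝ)
    (hg : ∀ T x, g (updA T kk x) = g T) :
    ∑ T, g T * pi kk u (T.2.1 kk) = (Fintype.card A : ℝ)⁻¹ * ∑ T, g T := by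
  rw [sum_split_A kk g _ hg]
  congr 1
  refine Finset.sum_congr rfl fun T _ => ?_
  rw [Finset.sum_congr rfl fun x (_ : x ∈ Finset.univ) => by rw [updA_snd_same], hpi, mul_one]

lemma peel_indS (i : Fin (H + 2)) (s₀ : S) (g : Traj S A R H → ℝ)
    (hg : ∀ T x, g (updS T i x) = g T) :
    ∑ T, g T * ind1S i s₀ T = (Fintype.card S : ℝ)⁻¹ * ∑ T, g T := by
  rw [sum_split_S i g _ hg]
  congr 1
  refine Finset.sum_congr rfl fun T _ => ?_
  rw [ind1S_sum, mul_one]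

lemma peel_indA (i : Fin (H + 1)) (a₀ : A) (g : Traj S A R H → ℝ)
    (hg : ∀ T x, g (updA T i x) = g T) :
    ∑ T, g T * ind1A i a₀ T = (Fintype.card A : ℝ)⁻¹ * ∑ T, g T := by
  rw [sum_split_A i g _ hg]
  congr 1
  refine Finset.sum_congr rfl fun T _ => ?_
  rw [ind1A_sum, mul_one]

lemma pref_succ' (M : Model S A R H D) (pi : Fin (H + 1) → S → A → ℝ) (kk : Fin (H + 1))
    (T : Traj S A R H) :
    pref M pi ((kk : ℕ) + 1) T = pref M pi (kk : ℕ) T * Wfac M pi kk T := by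
  have h := pref_succ M pi (kk : ℕ) (by omega) T
  rwa [show (⟨(kk : ℕ), by omega⟩ : Fin (H + 1)) = kk from rfl] at h

lemma four_point (M : Model S A R H D) (pi : Fin (H + 1) → S → A → ℝ)
    (hpi : ∀ t s, ∑ a, pi t s a = 1)
    (hrw : ∀ t s a, ∑ r, M.prew t s a r = 1)
    (htr : ∀ t s a, ∑ s', M.ptr t s a s' = 1)
    (j j' : Fin (H + 1)) (hjj : (j' : ℕ) + 1 = (j : ℕ))
    (s' : S) (a' : A) (s : S) (a : A) :
    ∑ T, M.traj pi T *
        (ind1S j'.castSucc s' T * ind1A j' a' T * (ind1S j.castSucc s T * ind1A j a T))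
      = jointProb (M.traj pi) j' s' a' * M.ptr j' s' a' s * pi j s a := by
  have hjH : (j : ℕ) ≤ H := by omega
  have hsucc_eq : j'.succ = j.castSucc := Fin.ext (by simp [Fin.val_succ, Fin.coe_castSucc, hjj])
  -- Step A : marginalize the tail beyond time j
  have stepA : ∑ T, M.traj pi T *
        (ind1S j'.castSucc s' T * ind1A j' a' T * (ind1S j.castSucc s T * ind1A j a T))
      = (((Fintype.card S * Fintype.card A * Fintype.card R : ℕ) : ℝ) ^ (H - (j : ℕ)))⁻¹ *
          ∑ T, pref M pi ((j : ℕ) + 1) T *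
            (ind1S j'.castSucc s' T * ind1A j' a' T * (ind1S j.castSucc s T * ind1A j a T)) := by
    refine tail_sum M pi hpi hrw htr _ (H - (j : ℕ)) ((j : ℕ) + 1) (by omega) ?_ ?_ ?_
    · intro T i x h
      rw [ind1S_updS_ne _ _ _ _ _ (Fin.ne_of_val_ne (by simp only [Fin.coe_castSucc]; omega)),
        ind1S_updS_ne _ _ _ _ _ (Fin.ne_of_val_ne (by simp only [Fin.coe_castSucc]; omega)),
        ind1A_updS, ind1A_updS]
    · intro T i x h
      rw [ind1A_updA_ne _ _ _ _ _ (Fin.ne_of_val_ne (by omega)),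
        ind1A_updA_ne _ _ _ _ _ (Fin.ne_of_val_ne (by omega)), ind1S_updA, ind1S_updA]
    · intro T i x h
      rw [ind1S_updR, ind1S_updR, ind1A_updR, ind1A_updR]
  -- pinning the time-j factor on the event
  have pin1 : ∀ T : Traj S A R H, Wfac M pi j T *
      (ind1S j'.castSucc s' T * ind1A j' a' T * (ind1S j.castSucc s T * ind1A j a T))
      = (ind1S j'.castSucc s' T * ind1A j' a' T * (ind1S j.castSucc s T * ind1A j a T)) *
        (pi j s a * M.prew j s a (T.2.2 j) * M.ptr j s a (T.1 j.succ)) := by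
    intro T
    by_cases h1 : T.1 j.castSucc = s
    · by_cases h2 : T.2.1 j = a
      · unfold Wfac; rw [h1, h2]; ring
      · unfold ind1A; rw [if_neg h2]; ring
    · unfold ind1S; rw [if_neg h1]; ring
  -- Step B : integrate out s_{j+1}, r_j, a_j
  have stepB : ∑ T, pref M pi ((j : ℕ) + 1) T *
        (ind1S j'.castSucc s' T * ind1A j' a' T * (ind1S j.castSucc s T * ind1A j a T))
      = (Fintype.card S : ℝ)⁻¹ * ((Fintype.card R : ℝ)⁻¹ * ((Fintype.card A : ℝ)⁻¹ *
          ((∑ T, pref M pi (j : ℕ) T *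
            (ind1S j'.castSucc s' T * ind1A j' a' T * ind1S j.castSucc s T)) * pi j s a))) := by
    have e1 : ∑ T, pref M pi ((j : ℕ) + 1) T *
        (ind1S j'.castSucc s' T * ind1A j' a' T * (ind1S j.castSucc s T * ind1A j a T))
        = ∑ T, (pref M pi (j : ℕ) T *
            (ind1S j'.castSucc s' T * ind1A j' a' T * (ind1S j.castSucc s T * ind1A j a T)) *
            (pi j s a * M.prew j s a (T.2.2 j))) * M.ptr j s a (T.1 j.succ) := by
      refine Finset.sum_congr rfl fun T _ => ?_
      rw [pref_succ' M pi j T, mul_assoc, pin1 T]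
      ring
    rw [e1, peel_S M htr j j.succ s a _ ?hg1]
    case hg1 =>
      intro T x
      rw [pref_updS M pi (j : ℕ) T j.succ x (by simp only [Fin.val_succ]; omega),
        ind1S_updS_ne _ _ _ _ _ (Fin.ne_of_val_ne (by simp only [Fin.coe_castSucc, Fin.val_succ]; omega)),
        ind1S_updS_ne _ _ _ _ _ (Fin.ne_of_val_ne (by simp only [Fin.coe_castSucc, Fin.val_succ]; omega)),
        ind1A_updS, ind1A_updS]
      rfl
    congr 1
    have e2 : ∑ T, pref M pi (j : ℕ) T *
        (ind1S j'.castSucc s' T * ind1A j' a' T * (ind1S j.castSucc s T * ind1A j a T)) *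
        (pi j s a * M.prew j s a (T.2.2 j))
        = ∑ T, (pref M pi (j : ℕ) T *
            (ind1S j'.castSucc s' T * ind1A j' a' T * (ind1S j.castSucc s T * ind1A j a T)) *
            pi j s a) * M.prew j s a (T.2.2 j) :=
      Finset.sum_congr rfl fun T _ => by ring
    rw [e2, peel_R M hrw j s a _ ?hg2]
    case hg2 =>
      intro T x
      rw [pref_updR M pi (j : ℕ) T j x le_rfl, ind1S_updR, ind1S_updR, ind1A_updR, ind1A_updR]
    congr 1
    have e3 : ∑ T, pref M pi (j : ℕ) T *
        (ind1S j'.castSucc s' T * ind1A j' a' T * (ind1S j.castSucc s T * ind1A j a T)) * pi j s a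
        = ∑ T, (pref M pi (j : ℕ) T *
            (ind1S j'.castSucc s' T * ind1A j' a' T * ind1S j.castSucc s T) * pi j s a) *
            ind1A j a T :=
      Finset.sum_congr rfl fun T _ => by ring
    rw [e3, peel_indA j a _ ?hg3]
    case hg3 =>
      intro T x
      rw [pref_updA M pi (j : ℕ) T j x le_rfl, ind1S_updA, ind1S_updA,
        ind1A_updA_ne _ _ _ _ _ (Fin.ne_of_val_ne (by omega))]
    rw [Finset.sum_mul]
  -- pinning the time-j' factor
  have pin2 : ∀ T : Traj S A R H, Wfac M pi j' T *
      (ind1S j'.castSucc s' T * ind1A j' a' T * ind1S j.castSucc s T)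
      = (ind1S j'.castSucc s' T * ind1A j' a' T * ind1S j.castSucc s T) *
        (pi j' s' a' * M.prew j' s' a' (T.2.2 j') * M.ptr j' s' a' s) := by
    intro T
    by_cases h1 : T.1 j'.castSucc = s'
    · by_cases h2 : T.2.1 j' = a'
      · by_cases h3 : T.1 j.castSucc = s
        · unfold Wfac; rw [hsucc_eq, h1, h2, h3]; ring
        · have : ind1S j.castSucc s T = 0 := by unfold ind1S; rw [if_neg h3]
          rw [this]; ring
      · have : ind1A j' a' T = 0 := by unfold ind1A; rw [if_neg h2]
        rw [this]; ring
    · have : ind1S j'.castSucc s' T = 0 := by unfold ind1S; rw [if_neg h1]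
      rw [this]; ring
  -- Step C : integrate out r_{j'} and s_j
  have stepC : ∑ T, pref M pi (j : ℕ) T *
        (ind1S j'.castSucc s' T * ind1A j' a' T * ind1S j.castSucc s T)
      = (Fintype.card R : ℝ)⁻¹ * ((Fintype.card S : ℝ)⁻¹ *
          ((∑ T, pref M pi (j' : ℕ) T * (ind1S j'.castSucc s' T * ind1A j' a' T)) *
            (pi j' s' a' * M.ptr j' s' a' s))) := by
    have e1 : ∑ T, pref M pi (j : ℕ) T *
        (ind1S j'.castSucc s' T * ind1A j' a' T * ind1S j.castSucc s T)
        = ∑ T, (pref M pi (j' : ℕ) T *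
            (ind1S j'.castSucc s' T * ind1A j' a' T * ind1S j.castSucc s T) *
            (pi j' s' a' * M.ptr j' s' a' s)) * M.prew j' s' a' (T.2.2 j') := by
      refine Finset.sum_congr rfl fun T _ => ?_
      rw [← hjj, pref_succ' M pi j' T, mul_assoc, pin2 T]
      ring
    rw [e1, peel_R M hrw j' s' a' _ ?hg4]
    case hg4 =>
      intro T x
      rw [pref_updR M pi (j' : ℕ) T j' x le_rfl, ind1S_updR, ind1S_updR, ind1A_updR]
    congr 1
    have e2 : ∑ T, pref M pi (j' : ℕ) T *
        (ind1S j'.castSucc s' T * ind1A j' a' T * ind1S j.castSucc s T) *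
        (pi j' s' a' * M.ptr j' s' a' s)
        = ∑ T, (pref M pi (j' : ℕ) T * (ind1S j'.castSucc s' T * ind1A j' a' T) *
            (pi j' s' a' * M.ptr j' s' a' s)) * ind1S j.castSucc s T :=
      Finset.sum_congr rfl fun T _ => by ring
    rw [e2, peel_indS j.castSucc s _ ?hg5]
    case hg5 =>
      intro T x
      rw [pref_updS M pi (j' : ℕ) T j.castSucc x (by simp only [Fin.coe_castSucc]; omega),
        ind1S_updS_ne _ _ _ _ _ (Fin.ne_of_val_ne (by simp only [Fin.coe_castSucc]; omega)),
        ind1A_updS]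
    rw [Finset.sum_mul]
  -- pinning for the jointProb at time j'
  have pin3 : ∀ T : Traj S A R H, Wfac M pi j' T *
      (ind1S j'.castSucc s' T * ind1A j' a' T)
      = (ind1S j'.castSucc s' T * ind1A j' a' T) *
        (pi j' s' a' * M.prew j' s' a' (T.2.2 j') * M.ptr j' s' a' (T.1 j'.succ)) := by
    intro T
    by_cases h1 : T.1 j'.castSucc = s'
    · by_cases h2 : T.2.1 j' = a'
      · unfold Wfac; rw [h1, h2]; ring
      · have : ind1A j' a' T = 0 := by unfold ind1A; rw [if_neg h2]
        rw [this]; ring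
    · have : ind1S j'.castSucc s' T = 0 := by unfold ind1S; rw [if_neg h1]
      rw [this]; ring
  -- Step D : the jointProb at time j' in terms of the same base sum
  have stepD : ∑ T, pref M pi ((j' : ℕ) + 1) T * (ind1S j'.castSucc s' T * ind1A j' a' T)
      = (Fintype.card S : ℝ)⁻¹ * ((Fintype.card R : ℝ)⁻¹ *
          ((∑ T, pref M pi (j' : ℕ) T * (ind1S j'.castSucc s' T * ind1A j' a' T)) *
            pi j' s' a')) := by
    have e1 : ∑ T, pref M pi ((j' : ℕ) + 1) T * (ind1S j'.castSucc s' T * ind1A j' a' T)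
        = ∑ T, (pref M pi (j' : ℕ) T * (ind1S j'.castSucc s' T * ind1A j' a' T) *
            (pi j' s' a' * M.prew j' s' a' (T.2.2 j'))) * M.ptr j' s' a' (T.1 j'.succ) := by
      refine Finset.sum_congr rfl fun T _ => ?_
      rw [pref_succ' M pi j' T, mul_assoc, pin3 T]
      ring
    rw [e1, peel_S M htr j' j'.succ s' a' _ ?hg6]
    case hg6 =>
      intro T x
      rw [pref_updS M pi (j' : ℕ) T j'.succ x (by simp only [Fin.val_succ]; omega),
        ind1S_updS_ne _ _ _ _ _
          (Fin.ne_of_val_ne (by simp only [Fin.coe_castSucc, Fin.val_succ]; omega)),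
        ind1A_updS]
      rfl
    congr 1
    have e2 : ∑ T, pref M pi (j' : ℕ) T * (ind1S j'.castSucc s' T * ind1A j' a' T) *
        (pi j' s' a' * M.prew j' s' a' (T.2.2 j'))
        = ∑ T, (pref M pi (j' : ℕ) T * (ind1S j'.castSucc s' T * ind1A j' a' T) *
            pi j' s' a') * M.prew j' s' a' (T.2.2 j') :=
      Finset.sum_congr rfl fun T _ => by ring
    rw [e2, peel_R M hrw j' s' a' _ ?hg7]
    case hg7 =>
      intro T x
      rw [pref_updR M pi (j' : ℕ) T j' x le_rfl, ind1S_updR, ind1A_updR]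
    rw [Finset.sum_mul]
  -- combine
  have hJ : jointProb (M.traj pi) j' s' a'
      = (((Fintype.card S * Fintype.card A * Fintype.card R : ℕ) : ℝ) ^ (H - (j' : ℕ)))⁻¹ *
          ((Fintype.card S : ℝ)⁻¹ * ((Fintype.card R : ℝ)⁻¹ *
            ((∑ T, pref M pi (j' : ℕ) T * (ind1S j'.castSucc s' T * ind1A j' a' T)) *
              pi j' s' a'))) := by
    rw [jointProb_tail M pi hpi hrw htr j' s' a', stepD]
  have hpow : H - (j' : ℕ) = (H - (j : ℕ)) + 1 := by omega
  rw [stepA, stepB, stepC, hJ, hpow, pow_succ]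
  push_cast
  ring

/-- Recursive and importance-sampling characterizations of the marginal
state–action density ratio: (i) `μ_j(s,a) = E_{p_{π^b}}[μ_{j-1}(s_{j-1},a_{j-1}) ν̃_j ∣ s_j=s, a_j=a]`
(with `μ_{-1} ≡ 1`), and (ii) `μ_j(s,a) = E_{p_{π^b}}[ν_{0:j} ∣ s_j = s, a_j = a]`. -/
theorem mu_recursion_and_IS (M : Model S A R H D) (θ : Param D)
    (hvalid : M.Valid) :
    (∀ (j : Fin (H + 1)) (s : S) (a : A),
      M.mufun θ j s a =
        cexp M.pb (fun T => T.1 j.castSucc = s ∧ T.2.1 j = a)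
          (fun T => M.muPrev θ j T * M.nu θ j T)) ∧
    (∀ (j : Fin (H + 1)) (s : S) (a : A),
      M.mufun θ j s a =
        cexp M.pb (fun T => T.1 j.castSucc = s ∧ T.2.1 j = a)
          (M.nuUpto θ ((j : ℕ) + 1))) := by
  classical
  have hprs := hvalid.prew_sum
  have hpts := hvalid.ptr_sum
  have hpibs := hvalid.pib_sum
  have hpits := hvalid.pit_sum
  have hpibp := hvalid.pib_pos
  have hmarg := hvalid.pb_marg_pos
  -- Part (ii)
  have part2 : ∀ (j : Fin (H + 1)) (s : S) (a : A),
      M.mufun θ j s a =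
        cexp M.pb (fun T => T.1 j.castSucc = s ∧ T.2.1 j = a)
          (M.nuUpto θ ((j : ℕ) + 1)) := by
    intro j s a
    have key : cexp M.pb (fun T => T.1 j.castSucc = s ∧ T.2.1 j = a)
        (M.nuUpto θ ((j : ℕ) + 1))
        = (jointProb M.pb j s a)⁻¹ * jointProb (M.pe θ) j s a := by
      unfold cexp
      simp only [smul_eq_mul]
      congr 1
      · congr 1
        unfold jointProb
        refine Finset.sum_congr rfl fun T _ => ?_
        by_cases hT : T.1 j.castSucc = s ∧ T.2.1 j = a
        · rw [if_pos hT, if_pos hT]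
        · rw [if_neg hT, if_neg hT]
      · -- the numerator
        have hpw : ∀ T, M.pb T * M.nuUpto θ ((j : ℕ) + 1) T
            = M.traj (fun t => if (t : ℕ) ≤ (j : ℕ) then M.pit θ t else M.pib t) T := by
          intro T
          unfold Model.pb Model.traj Model.nuUpto Model.nu
          rw [mul_assoc, ← Finset.prod_mul_distrib]
          refine congrArg (M.p0 (T.1 0) * ·) (Finset.prod_congr rfl fun t _ => ?_)
          beta_reduce
          by_cases ht : (t : ℕ) < (j : ℕ) + 1
          · rw [if_pos ht, if_pos (show (t : ℕ) ≤ (j : ℕ) by omega)]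
            have hb := (hpibp t (T.1 t.castSucc) (T.2.1 t)).ne'
            field_simp
          · rw [if_neg ht, if_neg (show ¬ (t : ℕ) ≤ (j : ℕ) by omega), mul_one]
        have h1 : (∑ T, if T.1 j.castSucc = s ∧ T.2.1 j = a then
              M.pb T * M.nuUpto θ ((j : ℕ) + 1) T else 0)
            = jointProb (M.traj (fun t => if (t : ℕ) ≤ (j : ℕ) then M.pit θ t else M.pib t))
                j s a := by
          unfold jointProb
          refine Finset.sum_congr rfl fun T _ => ?_
          by_cases hT : T.1 j.castSucc = s ∧ T.2.1 j = a
          · rw [if_pos hT, if_pos hT, hpw]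
          · rw [if_neg hT, if_neg hT]
        rw [h1]
        exact jointProb_policy_agree M _ (M.pit θ)
          (fun t s0 => by
            by_cases h : (t : ℕ) ≤ (j : ℕ)
            · rw [if_pos h]; exact hpits θ t s0
            · rw [if_neg h]; exact hpibs t s0)
          (hpits θ) hprs hpts j s a
          (fun t ht => if_pos ht)
    rw [key]
    unfold Model.mufun
    rw [div_eq_mul_inv, mul_comm]
  refine ⟨?_, part2⟩
  -- Part (i)
  intro j s a
  by_cases hj0 : (j : ℕ) = 0
  · have hfun : (fun T => M.muPrev θ j T * M.nu θ j T)
        = M.nuUpto θ ((j : ℕ) + 1) := by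
      funext T
      have hmp : M.muPrev θ j T = 1 := by unfold Model.muPrev; rw [if_pos hj0]
      have h1 : M.nuUpto θ ((j : ℕ) + 1) T = M.nu θ j T := by
        unfold Model.nuUpto
        rw [Fintype.prod_eq_single j ?_]
        · rw [if_pos (by omega)]
        · intro t ht
          refine if_neg fun hc => ht (Fin.ext ?_)
          omega
      rw [hmp, one_mul, h1]
    rw [hfun]
    exact part2 j s a
  · -- j ≥ 1
    set j' : Fin (H + 1) := ⟨(j : ℕ) - 1, by omega⟩ with hj'
    have hjj : (j' : ℕ) + 1 = (j : ℕ) := by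
      rw [hj']
      show (j : ℕ) - 1 + 1 = (j : ℕ)
      omega
    set c₀ : ℝ := M.pit θ j s a / M.pib j s a with hc₀
    have key : cexp M.pb (fun T => T.1 j.castSucc = s ∧ T.2.1 j = a)
        (fun T => M.muPrev θ j T * M.nu θ j T)
        = (jointProb M.pb j s a)⁻¹ * jointProb (M.pe θ) j s a := by
      unfold cexp
      simp only [smul_eq_mul]
      congr 1
      · congr 1
        unfold jointProb
        refine Finset.sum_congr rfl fun T _ => ?_
        by_cases hT : T.1 j.castSucc = s ∧ T.2.1 j = a
        · rw [if_pos hT, if_pos hT]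
        · rw [if_neg hT, if_neg hT]
      · -- numerator
        have e1 : ∀ T : Traj S A R H,
            (if T.1 j.castSucc = s ∧ T.2.1 j = a then
              M.pb T * (M.muPrev θ j T * M.nu θ j T) else 0)
            = ∑ s₁ : S, ∑ a₁ : A, (M.mufun θ j' s₁ a₁ * c₀) *
                (M.pb T * (ind1S j'.castSucc s₁ T * ind1A j' a₁ T *
                  (ind1S j.castSucc s T * ind1A j a T))) := by
          intro T
          by_cases hT : T.1 j.castSucc = s ∧ T.2.1 j = a
          · obtain ⟨h1, h2⟩ := hT
            rw [if_pos ⟨h1, h2⟩]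
            have hcollapse : ∀ s₁ a₁, (M.mufun θ j' s₁ a₁ * c₀) *
                (M.pb T * (ind1S j'.castSucc s₁ T * ind1A j' a₁ T *
                  (ind1S j.castSucc s T * ind1A j a T)))
                = if T.1 j'.castSucc = s₁ then
                    (if T.2.1 j' = a₁ then M.mufun θ j' s₁ a₁ * c₀ * M.pb T else 0) else 0 := by
              intro s₁ a₁
              unfold ind1S ind1A
              rw [if_pos h1, if_pos h2]
              by_cases hs₁ : T.1 j'.castSucc = s₁
              · by_cases ha₁ : T.2.1 j' = a₁
                · simp only [if_pos hs₁, if_pos ha₁]; ring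
                · simp only [if_pos hs₁, if_neg ha₁]; ring
              · simp only [if_neg hs₁]; ring
            have hinner : ∀ s₁ : S, (∑ a₁ : A, if T.1 j'.castSucc = s₁ then
                  (if T.2.1 j' = a₁ then M.mufun θ j' s₁ a₁ * c₀ * M.pb T else 0) else 0)
                = if T.1 j'.castSucc = s₁ then
                    M.mufun θ j' s₁ (T.2.1 j') * c₀ * M.pb T else 0 := by
              intro s₁
              by_cases hs₁ : T.1 j'.castSucc = s₁
              · simp only [if_pos hs₁]
                rw [Finset.sum_ite_eq Finset.univ (T.2.1 j')
                  (fun a₁ => M.mufun θ j' s₁ a₁ * c₀ * M.pb T), if_pos (Finset.mem_univ _)]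
              · simp only [if_neg hs₁, Finset.sum_const_zero]
            rw [Finset.sum_congr rfl fun s₁ _ =>
                (Finset.sum_congr rfl fun a₁ _ => hcollapse s₁ a₁).trans (hinner s₁),
              Finset.sum_ite_eq Finset.univ (T.1 j'.castSucc)
                (fun s₁ => M.mufun θ j' s₁ (T.2.1 j') * c₀ * M.pb T),
              if_pos (Finset.mem_univ _)]
            have hmp : M.muPrev θ j T = M.mufun θ j' (T.1 j'.castSucc) (T.2.1 j') := by
              unfold Model.muPrev
              rw [if_neg hj0]
            have hnu : M.nu θ j T = c₀ := by
              unfold Model.nu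
              rw [h1, h2, hc₀]
            rw [hmp, hnu]
            ring
          · rw [if_neg hT]
            symm
            refine Finset.sum_eq_zero fun s₁ _ => Finset.sum_eq_zero fun a₁ _ => ?_
            unfold ind1S ind1A
            rcases not_and_or.mp hT with h | h
            · rw [if_neg h]; ring
            · rw [if_neg h]; ring
        rw [Finset.sum_congr rfl fun T _ => e1 T, Finset.sum_comm]
        rw [Finset.sum_congr rfl fun s₁ (_ : s₁ ∈ Finset.univ) => Finset.sum_comm]
        have e2 : ∀ s₁ a₁, (∑ T, (M.mufun θ j' s₁ a₁ * c₀) *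
            (M.pb T * (ind1S j'.castSucc s₁ T * ind1A j' a₁ T *
              (ind1S j.castSucc s T * ind1A j a T))))
            = jointProb (M.pe θ) j' s₁ a₁ * M.ptr j' s₁ a₁ s * M.pit θ j s a := by
          intro s₁ a₁
          rw [← Finset.mul_sum]
          have hfp : (∑ T, M.pb T * (ind1S j'.castSucc s₁ T * ind1A j' a₁ T *
              (ind1S j.castSucc s T * ind1A j a T)))
              = jointProb M.pb j' s₁ a₁ * M.ptr j' s₁ a₁ s * M.pib j s a :=
            four_point M M.pib hpibs hprs hpts j j' hjj s₁ a₁ s a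
          rw [hfp]
          have hμ : M.mufun θ j' s₁ a₁ * jointProb M.pb j' s₁ a₁
              = jointProb (M.pe θ) j' s₁ a₁ := by
            unfold Model.mufun
            rw [div_mul_cancel₀ _ (hmarg j' s₁ a₁).ne']
          have hcc : c₀ * M.pib j s a = M.pit θ j s a := by
            rw [hc₀, div_mul_cancel₀ _ (hpibp j s a).ne']
          calc M.mufun θ j' s₁ a₁ * c₀ *
              (jointProb M.pb j' s₁ a₁ * M.ptr j' s₁ a₁ s * M.pib j s a)
              = (M.mufun θ j' s₁ a₁ * jointProb M.pb j' s₁ a₁) *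
                  (c₀ * M.pib j s a) * M.ptr j' s₁ a₁ s := by ring
            _ = jointProb (M.pe θ) j' s₁ a₁ * M.pit θ j s a * M.ptr j' s₁ a₁ s := by
                rw [hμ, hcc]
            _ = jointProb (M.pe θ) j' s₁ a₁ * M.ptr j' s₁ a₁ s * M.pit θ j s a := by ring
        rw [Finset.sum_congr rfl fun s₁ (_ : s₁ ∈ Finset.univ) =>
          Finset.sum_congr rfl fun a₁ (_ : a₁ ∈ Finset.univ) => e2 s₁ a₁]
        have e3 : ∀ s₁ a₁, jointProb (M.pe θ) j' s₁ a₁ * M.ptr j' s₁ a₁ s * M.pit θ j s a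
            = ∑ T, M.pe θ T * (ind1S j'.castSucc s₁ T * ind1A j' a₁ T *
                (ind1S j.castSucc s T * ind1A j a T)) :=
          fun s₁ a₁ =>
            (four_point M (M.pit θ) (hpits θ) hprs hpts j j' hjj s₁ a₁ s a).symm
        rw [Finset.sum_congr rfl fun s₁ (_ : s₁ ∈ Finset.univ) =>
          Finset.sum_congr rfl fun a₁ (_ : a₁ ∈ Finset.univ) => e3 s₁ a₁]
        rw [Finset.sum_congr rfl fun s₁ (_ : s₁ ∈ Finset.univ) => Finset.sum_comm,
          Finset.sum_comm]
        have e4 : ∀ T : Traj S A R H, (∑ s₁ : S, ∑ a₁ : A, M.pe θ T *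
            (ind1S j'.castSucc s₁ T * ind1A j' a₁ T *
              (ind1S j.castSucc s T * ind1A j a T)))
            = if T.1 j.castSucc = s ∧ T.2.1 j = a then M.pe θ T else 0 := by
          intro T
          have inner : ∀ s₁ : S, (∑ a₁ : A, M.pe θ T *
              (ind1S j'.castSucc s₁ T * ind1A j' a₁ T *
                (ind1S j.castSucc s T * ind1A j a T)))
              = (ind1S j'.castSucc s₁ T *
                  (M.pe θ T * (ind1S j.castSucc s T * ind1A j a T))) *
                  ∑ a₁ : A, ind1A j' a₁ T := by
            intro s₁
            rw [Finset.mul_sum]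
            exact Finset.sum_congr rfl fun a₁ _ => by ring
          rw [Finset.sum_congr rfl fun s₁ (_ : s₁ ∈ Finset.univ) => inner s₁]
          simp only [ind1A_partition j' T, mul_one]
          rw [← Finset.sum_mul, ind1S_partition j'.castSucc T, one_mul]
          unfold ind1S ind1A
          by_cases h1 : T.1 j.castSucc = s <;> by_cases h2 : T.2.1 j = a <;>
            simp [h1, h2]
        rw [Finset.sum_congr rfl fun T _ => e4 T]
        rfl
    rw [key]
    unfold Model.mufun
    rw [div_eq_mul_inv, mul_comm]


end OPPG
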